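/- If θ satisfies arccos(1/√3) < θ < π/2, then for every unit vector u ∈ ℝ³, the sum over i = 1,2,3 of b(arccos(|u·eᵢ|)/θ) is strictly positive, where b is the standard bump function. -/

import Mathlib

/-! Some coordinate of a unit vector in ℝ³ has absolute value at least `1/√3`, so the angle to that
axis is at most `arccos (1/√3) < θ` and its bump term is positive; the other terms are nonnegative. -/

noncomputable def bump (r : ℝ) : ℝ :=
  if |r| < 1 then Real.exp (r ^ 2 / (r ^ 2 - 1)) else 0

open Real

lemma bump_nonneg (r : ℝ) : 0 ≤ bump r := by
  unfold bump
  split_ifs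
  exacts [(exp_pos _).le, le_rfl]

lemma bump_pos {r : ℝ} (h : |r| < 1) : 0 < bump r := by
  rw [bump, if_pos h]
  exact exp_pos _

lemma bump_div_pos {x θ : ℝ} (hx : 0 ≤ x) (hxθ : x < θ) : 0 < bump (x / θ) := by
  have hθ : 0 < θ := hx.trans_lt hxθ
  apply bump_pos
  rwa [abs_of_nonneg (div_nonneg hx hθ.le), div_lt_one hθ]

lemma EuclideanSpace.exists_norm_div_sqrt_card_le_abs {ι : Type*} [Fintype ι] [Nonempty ι]
    (u : EuclideanSpace ℝ ι) : ∃ i, ‖u‖ / √(Fintype.card ι) ≤ |u i| := by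
  obtain ⟨i, hi⟩ := Finite.exists_max fun j => |u j|
  refine ⟨i, div_le_of_le_mul₀ (sqrt_nonneg _) (abs_nonneg _) ?_⟩
  have hsq : ‖u‖ ^ 2 ≤ Fintype.card ι * |u i| ^ 2 := by
    calc ‖u‖ ^ 2 = ∑ j, |u j| ^ 2 := by simp [EuclideanSpace.real_norm_sq_eq]
      _ ≤ ∑ _j : ι, |u i| ^ 2 :=
        Finset.sum_le_sum fun j _ => pow_le_pow_left₀ (abs_nonneg _) (hi j) 2
      _ = Fintype.card ι * |u i| ^ 2 := by simp
  calc ‖u‖ = √(‖u‖ ^ 2) := (sqrt_sq (norm_nonneg u)).symm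
    _ ≤ √(Fintype.card ι * |u i| ^ 2) := sqrt_le_sqrt hsq
    _ = |u i| * √(Fintype.card ι) := by
      rw [sqrt_mul (Nat.cast_nonneg _), sqrt_sq (abs_nonneg _), mul_comm]

theorem bump_sum_pos_general (θ : ℝ) (hθ₁ : Real.arccos (1 / Real.sqrt 3) < θ)
    (u : EuclideanSpace ℝ (Fin 3)) (hu : ‖u‖ = 1) :
    0 < ∑ i : Fin 3, bump (Real.arccos |u i| / θ) := by
  obtain ⟨i, hi⟩ := u.exists_norm_div_sqrt_card_le_abs
  rw [hu, Fintype.card_fin, Nat.cast_ofNat] at hi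
  refine Finset.sum_pos' (fun j _ => bump_nonneg _) ⟨i, Finset.mem_univ i, ?_⟩
  exact bump_div_pos (arccos_nonneg _) ((arccos_le_arccos hi).trans_lt hθ₁)

theorem bump_sum_pos (θ : ℝ) (hθ₁ : Real.arccos (1 / Real.sqrt 3) < θ)
    (hθ₂ : θ < Real.pi / 2) (u : EuclideanSpace ℝ (Fin 3)) (hu : ‖u‖ = 1) :
    0 < ∑ i : Fin 3, bump (Real.arccos |u i| / θ) :=
  bump_sum_pos_general θ hθ₁ u hu
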